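/- Every abelian subgroup of the dicyclic group Q_{4n} (n ≥ 1) is cyclic. -/

import Mathlib

/-!
An abelian subgroup either lies in the cyclic subgroup `⟨a 1⟩`, or it contains some `xa i`.
In the second case it lies in the centralizer of `xa i`, which is the cyclic group
`⟨xa i⟩ = {1, xa i, a n, xa (i + n)}`: commuting with `xa i` forces the index difference `d`
to satisfy `2 d = 0` in `ZMod (2 n)`, i.e. `d ∈ {0, n}`.
-/

namespace ZMod

theorem eq_zero_or_eq_of_add_self_eq_zero {n : ℕ} {j : ZMod (2 * n)} (h : j + j = 0) :
    j = 0 ∨ j = n := by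
  obtain ⟨k, rfl⟩ := ZMod.intCast_surjective j
  have h2k : ((2 * n : ℕ) : ℤ) ∣ 2 * k := by
    rw [← ZMod.intCast_zmod_eq_zero_iff_dvd]
    push_cast
    linear_combination h
  obtain ⟨m, rfl⟩ : (n : ℤ) ∣ k := (mul_dvd_mul_iff_left two_ne_zero).mp (by exact_mod_cast h2k)
  have h2n : (2 * n : ZMod (2 * n)) = 0 := by exact_mod_cast ZMod.natCast_self (2 * n)
  obtain ⟨t, rfl | rfl⟩ := Int.even_or_odd' m
  · left
    push_cast
    linear_combination t * h2n
  · right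
    push_cast
    linear_combination t * h2n

end ZMod

namespace QuaternionGroup

variable {n : ℕ}

theorem a_one_zpow (k : ℤ) : (a 1 : QuaternionGroup n) ^ k = a k := by
  induction k using Int.induction_on with
  | zero => rw [zpow_zero, Int.cast_zero, one_def]
  | succ k ih => rw [zpow_add_one, ih, a_mul_a, Int.cast_add, Int.cast_one]
  | pred k ih =>
    rw [zpow_sub_one, ih, show (a 1)⁻¹ = a (-1) from rfl, a_mul_a, Int.cast_sub, Int.cast_one,
      sub_eq_add_neg]

theorem a_mem_zpowers_a_one (j : ZMod (2 * n)) : a j ∈ Subgroup.zpowers (a 1) := by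
  obtain ⟨k, rfl⟩ := ZMod.intCast_surjective j
  exact ⟨k, a_one_zpow k⟩

theorem mem_zpowers_xa_of_commute {g : QuaternionGroup n} {i : ZMod (2 * n)}
    (h : Commute g (xa i)) : g ∈ Subgroup.zpowers (xa i) := by
  cases g with
  | a j =>
    have hj : j + j = 0 := by
      have := h.eq
      rw [a_mul_xa, xa_mul_a, xa.injEq] at this
      linear_combination -this
    rcases ZMod.eq_zero_or_eq_of_add_self_eq_zero hj with rfl | rfl
    · exact ⟨0, rfl⟩
    · exact ⟨2, by simp [xa_sq]⟩
  | xa j =>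
    have hji : (j - i) + (j - i) = 0 := by
      have := h.eq
      rw [xa_mul_xa, xa_mul_xa, a.injEq] at this
      linear_combination -this
    rcases ZMod.eq_zero_or_eq_of_add_self_eq_zero hji with hj | hj
    · obtain rfl : j = i := sub_eq_zero.mp hj
      exact Subgroup.mem_zpowers _
    · obtain rfl : j = i + n := eq_add_of_sub_eq' hj
      exact ⟨3, show xa i ^ (3 : ℤ) = _ by rw [zpow_ofNat, pow_succ', xa_sq, xa_mul_a]⟩

end QuaternionGroup

open QuaternionGroup

theorem quaternionGroup_abelian_subgroup_isCyclic_general (n : ℕ)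
    (H : Subgroup (QuaternionGroup n)) (hH : ∀ x y : H, x * y = y * x) :
    IsCyclic H := by
  by_cases hxa : ∃ i, xa i ∈ H
  · obtain ⟨i, hi⟩ := hxa
    refine Subgroup.isCyclic_of_le (H' := Subgroup.zpowers (xa i)) fun g hg => ?_
    exact mem_zpowers_xa_of_commute (congrArg Subtype.val (hH ⟨g, hg⟩ ⟨xa i, hi⟩))
  · push Not at hxa
    refine Subgroup.isCyclic_of_le (H' := Subgroup.zpowers (a 1)) fun g hg => ?_
    cases g with
    | a j => exact a_mem_zpowers_a_one j
    | xa i => exact absurd hg (hxa i)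

/-- Every abelian subgroup of the dicyclic group `Q_{4n}` (n ≥ 1) is cyclic. -/
theorem quaternionGroup_abelian_subgroup_isCyclic (n : ℕ) (hn : 1 ≤ n)
    (H : Subgroup (QuaternionGroup n)) (hH : ∀ x y : H, x * y = y * x) :
    IsCyclic H :=
  quaternionGroup_abelian_subgroup_isCyclic_general n H hH
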